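/- arXiv:1708.04396 — 2 statements merged into one kernel-verified Lean document; each statement's English description precedes it below -/
import Mathlib

section
/- The BiRank fixed-point equations p = α S^T u + (1-α) p^0, u = β S p + (1-β) u^0 with α, β ∈ (0,1) have the unique solution p* = (I - αβ S^T S)^{-1} [α(1-β) S^T u^0 + (1-α) p^0] and u* = (I - αβ S S^T)^{-1} [β(1-α) S p^0 + (1-β) u^0], provided all eigenvalues of S^T S lie in [-1,1]. -/
open Matrix

/-- The BiRank fixed-point equations `p = α Sᵀ u + (1-α) p⁰`, `u = β S p + (1-β) u⁰`
with `α, β ∈ (0,1)` have, provided all eigenvalues of `Sᵀ S` lie in `[-1,1]`, the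
unique solution
`p* = (I - αβ SᵀS)⁻¹ (α(1-β) Sᵀ u⁰ + (1-α) p⁰)`,
`u* = (I - αβ SSᵀ)⁻¹ (β(1-α) S p⁰ + (1-β) u⁰)`. -/
theorem stmt_6 {m n : Type*} [Fintype m] [Fintype n] [DecidableEq m] [DecidableEq n]
    (S : Matrix m n ℝ) (α β : ℝ)
    (hα : α ∈ Set.Ioo (0:ℝ) 1) (hβ : β ∈ Set.Ioo (0:ℝ) 1)
    (heig : ∀ (μ : ℝ) (v : n → ℝ), v ≠ 0 → (Sᵀ * S).mulVec v = μ • v →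
      μ ∈ Set.Icc (-1:ℝ) 1)
    (p0 : n → ℝ) (u0 : m → ℝ)
    (pstar : n → ℝ) (ustar : m → ℝ)
    (hp : pstar = (1 - (α * β) • (Sᵀ * S))⁻¹.mulVec
               ((α * (1 - β)) • Sᵀ.mulVec u0 + (1 - α) • p0))
    (hu : ustar = (1 - (α * β) • (S * Sᵀ))⁻¹.mulVec
               ((β * (1 - α)) • S.mulVec p0 + (1 - β) • u0)) :
    (pstar = α • Sᵀ.mulVec ustar + (1 - α) • p0 ∧
     ustar = β • S.mulVec pstar + (1 - β) • u0) ∧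
    ∀ (p : n → ℝ) (u : m → ℝ),
      p = α • Sᵀ.mulVec u + (1 - α) • p0 →
      u = β • S.mulVec p + (1 - β) • u0 →
      p = pstar ∧ u = ustar := by
  obtain ⟨hα0, hα1⟩ := hα
  obtain ⟨hβ0, hβ1⟩ := hβ
  set c : ℝ := α * β with hc
  have hc0 : 0 < c := mul_pos hα0 hβ0
  have hc1 : c < 1 := by nlinarith
  have hcinv : 1 < 1 / c := by rw [lt_div_iff₀ hc0]; linarith
  set A : Matrix n n ℝ := 1 - c • (Sᵀ * S) with hA
  set B : Matrix m m ℝ := 1 - c • (S * Sᵀ) with hB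
  -- A is invertible
  have hAdet : A.det ≠ 0 := by
    intro h
    obtain ⟨v, hv, hv0⟩ := Matrix.exists_mulVec_eq_zero_iff.mpr h
    have hvec : (Sᵀ * S).mulVec v = (1 / c) • v := by
      have h1 : v - c • (Sᵀ * S).mulVec v = 0 := by
        simpa [hA, Matrix.sub_mulVec, Matrix.one_mulVec, Matrix.smul_mulVec] using hv0
      have h2 : v = c • (Sᵀ * S).mulVec v := by
        rw [sub_eq_zero] at h1; exact h1
      have h3 := congrArg (fun w => (1/c) • w) h2
      simp only [smul_smul, one_div_mul_cancel hc0.ne', one_smul] at h3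
      exact h3.symm
    have := (heig (1 / c) v hv hvec).2
    linarith
  have hAunit : IsUnit A.det := isUnit_iff_ne_zero.mpr hAdet
  -- B is invertible
  have hBdet : B.det ≠ 0 := by
    intro h
    obtain ⟨v, hv, hv0⟩ := Matrix.exists_mulVec_eq_zero_iff.mpr h
    have hvec : (S * Sᵀ).mulVec v = (1 / c) • v := by
      have h1 : v - c • (S * Sᵀ).mulVec v = 0 := by
        simpa [hB, Matrix.sub_mulVec, Matrix.one_mulVec, Matrix.smul_mulVec] using hv0
      have h2 : v = c • (S * Sᵀ).mulVec v := by
        rw [sub_eq_zero] at h1; exact h1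
      have h3 := congrArg (fun w => (1/c) • w) h2
      simp only [smul_smul, one_div_mul_cancel hc0.ne', one_smul] at h3
      exact h3.symm
    by_cases hw : Sᵀ.mulVec v = 0
    · have hz0 : (S * Sᵀ).mulVec v = 0 := by
        rw [← Matrix.mulVec_mulVec, hw, Matrix.mulVec_zero]
      rw [hz0] at hvec
      have : v = 0 := by
        have h3 := hvec.symm
        rwa [smul_eq_zero_iff_right (by positivity : (1:ℝ)/c ≠ 0)] at h3
      exact hv this
    · have hvec' : (Sᵀ * S).mulVec (Sᵀ.mulVec v) = (1 / c) • Sᵀ.mulVec v := by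
        rw [Matrix.mulVec_mulVec, Matrix.mul_assoc, ← Matrix.mulVec_mulVec, hvec,
          Matrix.mulVec_smul]
      have := (heig (1 / c) _ hw hvec').2
      linarith
  have hBunit : IsUnit B.det := isUnit_iff_ne_zero.mpr hBdet
  set y : n → ℝ := (α * (1 - β)) • Sᵀ.mulVec u0 + (1 - α) • p0 with hy
  set z : m → ℝ := (β * (1 - α)) • S.mulVec p0 + (1 - β) • u0 with hz
  have hApstar : A.mulVec pstar = y := by
    rw [hp, Matrix.mulVec_mulVec, Matrix.mul_nonsing_inv _ hAunit, Matrix.one_mulVec]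
  have hBustar : B.mulVec ustar = z := by
    rw [hu, Matrix.mulVec_mulVec, Matrix.mul_nonsing_inv _ hBunit, Matrix.one_mulVec]
  have hAinj : ∀ x x' : n → ℝ, A.mulVec x = A.mulVec x' → x = x' := by
    intro x x' hxx
    have := congrArg (A⁻¹.mulVec) hxx
    rwa [Matrix.mulVec_mulVec, Matrix.mulVec_mulVec, Matrix.nonsing_inv_mul _ hAunit,
      Matrix.one_mulVec, Matrix.one_mulVec] at this
  have hBinj : ∀ x x' : m → ℝ, B.mulVec x = B.mulVec x' → x = x' := by
    intro x x' hxx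
    have := congrArg (B⁻¹.mulVec) hxx
    rwa [Matrix.mulVec_mulVec, Matrix.mulVec_mulVec, Matrix.nonsing_inv_mul _ hBunit,
      Matrix.one_mulVec, Matrix.one_mulVec] at this
  -- pstar fixed point form
  have hpfix : pstar = c • (Sᵀ * S).mulVec pstar + y := by
    have h := hApstar
    rw [hA, Matrix.sub_mulVec, Matrix.one_mulVec, Matrix.smul_mulVec] at h
    linear_combination (norm := module) h
  -- auxiliary identities
  have hSp : c • S.mulVec ((Sᵀ * S).mulVec pstar) = S.mulVec pstar - S.mulVec y := by
    have h := congrArg S.mulVec hpfix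
    rw [Matrix.mulVec_add, Matrix.mulVec_smul] at h
    linear_combination (norm := module) -h
  have hSy : S.mulVec y = (α * (1 - β)) • (S * Sᵀ).mulVec u0 + (1 - α) • S.mulVec p0 := by
    rw [hy, Matrix.mulVec_add, Matrix.mulVec_smul, Matrix.mulVec_smul, Matrix.mulVec_mulVec]
  -- candidate u
  set u' : m → ℝ := β • S.mulVec pstar + (1 - β) • u0 with hu'
  have hBu' : B.mulVec u' = z := by
    rw [hB, hu', hz, Matrix.sub_mulVec, Matrix.one_mulVec, Matrix.smul_mulVec,
      Matrix.mulVec_add, Matrix.mulVec_smul, Matrix.mulVec_smul]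
    have hSSp : (S * Sᵀ).mulVec (S.mulVec pstar) = S.mulVec ((Sᵀ * S).mulVec pstar) := by
      rw [Matrix.mulVec_mulVec, Matrix.mulVec_mulVec, Matrix.mul_assoc]
    rw [hSSp, hc]
    rw [hc] at hSp
    linear_combination (norm := module) (-β) • hSp + β • hSy
  have hust : ustar = u' := hBinj _ _ (by rw [hBustar, hBu'])
  have hSu' : Sᵀ.mulVec u' = β • (Sᵀ * S).mulVec pstar + (1 - β) • Sᵀ.mulVec u0 := by
    rw [hu', Matrix.mulVec_add, Matrix.mulVec_smul, Matrix.mulVec_smul, Matrix.mulVec_mulVec]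
  have heq1 : pstar = α • Sᵀ.mulVec ustar + (1 - α) • p0 := by
    rw [hust, hSu']
    rw [hc, hy] at hpfix
    linear_combination (norm := module) hpfix
  refine ⟨⟨heq1, by rw [hust, hu']⟩, ?_⟩
  intro p u hp1 hu1
  have hAp : A.mulVec p = y := by
    rw [hA, Matrix.sub_mulVec, Matrix.one_mulVec, Matrix.smul_mulVec]
    have h := hp1
    rw [hu1, Matrix.mulVec_add, Matrix.mulVec_smul, Matrix.mulVec_smul,
      Matrix.mulVec_mulVec] at h
    rw [hc, hy]
    linear_combination (norm := module) h
  have hpp : p = pstar := hAinj _ _ (by rw [hAp, hApstar])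
  refine ⟨hpp, ?_⟩
  rw [hu1, hpp, hust, hu']
end

section
/- Setting the partial derivatives of the BiRank regularization function R(u,p) to zero yields exactly the BiRank update equations: p_j = (1/(1+γ)) Σ_i (w_{ij}/(√d_i √d_j)) u_i + (γ/(1+γ)) p_j^0 and u_i = (1/(1+η)) Σ_j (w_{ij}/(√d_i √d_j)) p_j + (η/(1+η)) u_i^0; under the substitution γ = (1-α)/α, η = (1-β)/β these coincide with the BiRank iteration with parameters α, β. -/
/-!
Fixing all coordinates but one, `R` is a quadratic in the remaining one; because the degree
`d_j = Σ_i w_ij` cancels the `1 / √d_j` scaling, its leading coefficient is `1 + γ`, so the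
derivative vanishes exactly at the convex combination of the propagated score and the prior with
weights `1 / (1 + γ)` and `γ / (1 + γ)`. The substitution `γ = (1 - α) / α` turns these weights
into `α` and `1 - α`.
-/

open Finset Function

theorem sum_apply_update {ι α M : Type*} [Fintype ι] [DecidableEq ι] [AddCommMonoid M]
    (F : ι → α → M) (p : ι → α) (j : ι) (t : α) :
    ∑ k, F k (update p j t k) = F j t + ∑ k ∈ univ.erase j, F k (p k) := by
  rw [← add_sum_erase _ _ (mem_univ j), update_self]
  congr 1
  exact sum_congr rfl fun k hk => by rw [update_of_ne (ne_of_mem_erase hk)]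

theorem deriv_sum_apply_update {ι : Type*} [Fintype ι] [DecidableEq ι]
    (F : ι → ℝ → ℝ) (p : ι → ℝ) (j : ι) (C x : ℝ) :
    deriv (fun t => ∑ k, F k (update p j t k) + C) x = deriv (F j) x := by
  simp_rw [sum_apply_update, add_assoc]
  exact deriv_add_const _

section WeightedSquares

variable {ι : Type*} [Fintype ι] (c b : ι → ℝ) {s : ℝ} (κ q₀ : ℝ)

theorem hasDerivAt_sum_mul_div_sub_sq (hs : s ≠ 0) (hc : ∑ i, c i = s ^ 2) (x : ℝ) :
    HasDerivAt (fun q => ∑ i, c i * (q / s - b i) ^ 2 + κ * (q - q₀) ^ 2)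
      (2 * ((1 + κ) * x - ∑ i, c i * b i / s - κ * q₀)) x := by
  have hexpand : (fun q => ∑ i, c i * (q / s - b i) ^ 2 + κ * (q - q₀) ^ 2) = fun q =>
      q ^ 2 - 2 * (∑ i, c i * b i / s) * q + ∑ i, c i * b i ^ 2 + κ * (q - q₀) ^ 2 := by
    funext q
    have : ∑ i, c i * (q / s - b i) ^ 2
        = q ^ 2 / s ^ 2 * ∑ i, c i - 2 * q * ∑ i, c i * b i / s + ∑ i, c i * b i ^ 2 := by
      simp only [mul_sum, ← sum_sub_distrib, ← sum_add_distrib]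
      exact sum_congr rfl fun i _ => by ring
    rw [this, hc]
    field_simp
  rw [hexpand]
  have hderiv := ((((hasDerivAt_pow 2 x).sub ((hasDerivAt_id x).const_mul
    (2 * ∑ i, c i * b i / s))).add_const (∑ i, c i * b i ^ 2)).add
    (((hasDerivAt_id x).sub_const q₀).pow 2 |>.const_mul κ))
  refine hderiv.congr_deriv ?_
  simp only [Nat.cast_ofNat, Nat.add_one_sub_one, pow_one, mul_one, id_eq]
  ring

theorem deriv_sum_mul_div_sub_sq_eq_zero_iff (hs : s ≠ 0) (hc : ∑ i, c i = s ^ 2)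
    (hκ : 1 + κ ≠ 0) (x : ℝ) :
    deriv (fun q => ∑ i, c i * (q / s - b i) ^ 2 + κ * (q - q₀) ^ 2) x = 0 ↔
      x = 1 / (1 + κ) * ∑ i, c i * b i / s + κ / (1 + κ) * q₀ := by
  rw [(hasDerivAt_sum_mul_div_sub_sq c b κ q₀ hs hc x).deriv]
  field_simp
  constructor <;> intro h <;> linarith

end WeightedSquares

theorem deriv_sum_update_eq_zero_iff {ι ι' : Type*} [Fintype ι] [DecidableEq ι] [Fintype ι']
    (c : ι → ι' → ℝ) (b : ι' → ℝ) (s q₀ p : ι → ℝ) (κ C : ℝ) {j : ι} (hs : s j ≠ 0)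
    (hc : ∑ i, c j i = s j ^ 2) (hκ : 1 + κ ≠ 0) :
    deriv (fun t => ∑ k, (∑ i, c k i * (update p j t k / s k - b i) ^ 2
        + κ * (update p j t k - q₀ k) ^ 2) + C) (p j) = 0 ↔
      p j = 1 / (1 + κ) * ∑ i, c j i * b i / s j + κ / (1 + κ) * q₀ j := by
  rw [deriv_sum_apply_update
    (fun k q => ∑ i, c k i * (q / s k - b i) ^ 2 + κ * (q - q₀ k) ^ 2)]
  exact deriv_sum_mul_div_sub_sq_eq_zero_iff _ _ _ _ hs hc hκ _

theorem one_div_one_add_mul_add_div_one_add_mul {a κ : ℝ} (ha : a ≠ 0) (hκ : κ = (1 - a) / a)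
    (A q : ℝ) : 1 / (1 + κ) * A + κ / (1 + κ) * q = a * A + (1 - a) * q := by
  subst hκ
  field_simp
  ring

theorem stmt_13_general {m n : Type*} [Fintype m] [Fintype n] [DecidableEq m] [DecidableEq n]
    (w : m → n → ℝ)
    (du : m → ℝ) (hdu : ∀ i, du i = ∑ j, w i j) (hdu_pos : ∀ i, 0 < du i)
    (dp : n → ℝ) (hdp : ∀ j, dp j = ∑ i, w i j) (hdp_pos : ∀ j, 0 < dp j)
    (α β : ℝ) (hα : α ∈ Set.Ioo (0:ℝ) 1) (hβ : β ∈ Set.Ioo (0:ℝ) 1)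
    (γ η : ℝ) (hγ : γ = (1 - α) / α) (hη : η = (1 - β) / β)
    (p0 : n → ℝ) (u0 : m → ℝ)
    (R : (m → ℝ) → (n → ℝ) → ℝ)
    (hR : ∀ (u : m → ℝ) (p : n → ℝ),
      R u p = (∑ j, ∑ i, w i j *
                (p j / Real.sqrt (dp j) - u i / Real.sqrt (du i)) ^ 2)
           + γ * ∑ j, (p j - p0 j) ^ 2
           + η * ∑ i, (u i - u0 i) ^ 2)
    (u : m → ℝ) (p : n → ℝ) :
    (∀ j : n,
      (deriv (fun t => R u (Function.update p j t)) (p j) = 0 ↔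
        p j = (1 / (1 + γ)) *
                (∑ i, w i j / (Real.sqrt (du i) * Real.sqrt (dp j)) * u i)
              + (γ / (1 + γ)) * p0 j) ∧
      ((1 / (1 + γ)) * (∑ i, w i j / (Real.sqrt (du i) * Real.sqrt (dp j)) * u i)
         + (γ / (1 + γ)) * p0 j
       = α * (∑ i, w i j / (Real.sqrt (du i) * Real.sqrt (dp j)) * u i)
         + (1 - α) * p0 j)) ∧
    (∀ i : m,
      (deriv (fun t => R (Function.update u i t) p) (u i) = 0 ↔
        u i = (1 / (1 + η)) *
                (∑ j, w i j / (Real.sqrt (du i) * Real.sqrt (dp j)) * p j)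
              + (η / (1 + η)) * u0 i) ∧
      ((1 / (1 + η)) * (∑ j, w i j / (Real.sqrt (du i) * Real.sqrt (dp j)) * p j)
         + (η / (1 + η)) * u0 i
       = β * (∑ j, w i j / (Real.sqrt (du i) * Real.sqrt (dp j)) * p j)
         + (1 - β) * u0 i)) := by
  have hα0 : α ≠ 0 := hα.1.ne'
  have hβ0 : β ≠ 0 := hβ.1.ne'
  have hγ1 : 1 + γ ≠ 0 := by
    rw [hγ, one_add_div hα0, add_sub_cancel]; exact one_div_ne_zero hα0
  have hη1 : 1 + η ≠ 0 := by
    rw [hη, one_add_div hβ0, add_sub_cancel]; exact one_div_ne_zero hβ0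
  refine ⟨fun j => ⟨?_, one_div_one_add_mul_add_div_one_add_mul hα0 hγ _ _⟩,
    fun i => ⟨?_, one_div_one_add_mul_add_div_one_add_mul hβ0 hη _ _⟩⟩
  · have hRp : (fun t => R u (update p j t)) = fun t =>
        ∑ k, (∑ i, w i k * (update p j t k / √(dp k) - u i / √(du i)) ^ 2
          + γ * (update p j t k - p0 k) ^ 2) + η * ∑ i, (u i - u0 i) ^ 2 := by
      funext t
      rw [hR, sum_add_distrib, mul_sum]
    rw [hRp, deriv_sum_update_eq_zero_iff (fun k i => w i k) _ _ _ _ _ _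
      (Real.sqrt_pos.2 (hdp_pos j)).ne' (by rw [Real.sq_sqrt (hdp_pos j).le, hdp]) hγ1]
    simp only [mul_div_assoc', div_div, div_mul_eq_mul_div, mul_comm √(du _)]
  · have hRu : (fun t => R (update u i t) p) = fun t =>
        ∑ k, (∑ j, w k j * (update u i t k / √(du k) - p j / √(dp j)) ^ 2
          + η * (update u i t k - u0 k) ^ 2) + γ * ∑ j, (p j - p0 j) ^ 2 := by
      funext t
      rw [hR, sum_comm]
      simp only [sub_sq_comm (p _ / _), sum_add_distrib, mul_sum]
      ring
    rw [hRu, deriv_sum_update_eq_zero_iff w _ _ _ _ _ _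
      (Real.sqrt_pos.2 (hdu_pos i)).ne' (by rw [Real.sq_sqrt (hdu_pos i).le, hdu]) hη1]
    simp only [mul_div_assoc', div_div, div_mul_eq_mul_div, mul_comm √(dp _)]

/-- Setting the partial derivatives of the BiRank regularization function to zero
yields exactly the BiRank update equations, and under the substitutions
`γ = (1-α)/α`, `η = (1-β)/β` these coincide with the BiRank iteration with
parameters `α, β`. -/
theorem stmt_13 {m n : Type*} [Fintype m] [Fintype n] [DecidableEq m] [DecidableEq n]
    (w : m → n → ℝ) (hw : ∀ i j, 0 ≤ w i j)
    (du : m → ℝ) (hdu : ∀ i, du i = ∑ j, w i j) (hdu_pos : ∀ i, 0 < du i)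
    (dp : n → ℝ) (hdp : ∀ j, dp j = ∑ i, w i j) (hdp_pos : ∀ j, 0 < dp j)
    (α β : ℝ) (hα : α ∈ Set.Ioo (0:ℝ) 1) (hβ : β ∈ Set.Ioo (0:ℝ) 1)
    (γ η : ℝ) (hγ : γ = (1 - α) / α) (hη : η = (1 - β) / β)
    (p0 : n → ℝ) (u0 : m → ℝ)
    (R : (m → ℝ) → (n → ℝ) → ℝ)
    (hR : ∀ (u : m → ℝ) (p : n → ℝ),
      R u p = (∑ j, ∑ i, w i j *
                (p j / Real.sqrt (dp j) - u i / Real.sqrt (du i)) ^ 2)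
           + γ * ∑ j, (p j - p0 j) ^ 2
           + η * ∑ i, (u i - u0 i) ^ 2)
    (u : m → ℝ) (p : n → ℝ) :
    (∀ j : n,
      (deriv (fun t => R u (Function.update p j t)) (p j) = 0 ↔
        p j = (1 / (1 + γ)) *
                (∑ i, w i j / (Real.sqrt (du i) * Real.sqrt (dp j)) * u i)
              + (γ / (1 + γ)) * p0 j) ∧
      ((1 / (1 + γ)) * (∑ i, w i j / (Real.sqrt (du i) * Real.sqrt (dp j)) * u i)
         + (γ / (1 + γ)) * p0 j
       = α * (∑ i, w i j / (Real.sqrt (du i) * Real.sqrt (dp j)) * u i)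
         + (1 - α) * p0 j)) ∧
    (∀ i : m,
      (deriv (fun t => R (Function.update u i t) p) (u i) = 0 ↔
        u i = (1 / (1 + η)) *
                (∑ j, w i j / (Real.sqrt (du i) * Real.sqrt (dp j)) * p j)
              + (η / (1 + η)) * u0 i) ∧
      ((1 / (1 + η)) * (∑ j, w i j / (Real.sqrt (du i) * Real.sqrt (dp j)) * p j)
         + (η / (1 + η)) * u0 i
       = β * (∑ j, w i j / (Real.sqrt (du i) * Real.sqrt (dp j)) * p j)
         + (1 - β) * u0 i)) :=
  stmt_13_general w du hdu hdu_pos dp hdp hdp_pos α β hα hβ γ η hγ hη p0 u0 R hR u p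
end
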